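/- arXiv:1709.00079 — 7 statements merged into one kernel-verified Lean document; each statement's English description precedes it below -/
import Mathlib

section
/- For a positive integer s, the number of hooks of length s in a partition λ equals the number of elements b of the beta-set B(λ) such that b - s is not in B(λ). -/
/-- A partition: a weakly decreasing sequence of non-negative integers,
with finitely many nonzero terms (indices are 0-based; `parts i` is `λ_{i+1}`). -/
structure Partition' where
  parts : ℕ → ℕ
  antitone : ∀ i j : ℕ, i ≤ j → parts j ≤ parts i
  finite_support : ∃ N : ℕ, ∀ i : ℕ, N ≤ i → parts i = 0

/-- The beta-set `B(λ) = {λ_a - a : a ≥ 1}` of a partition. -/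
def betaSet (lam : Partition') : Set ℤ :=
  Set.range fun i : ℕ => (lam.parts i : ℤ) - (i + 1)

/-- The shifted set `S + c`. -/
def shiftSet (S : Set ℤ) (c : ℤ) : Set ℤ := (fun x => x + c) '' S

/-- The hook length of the node in row `i` (0-based), column `b` (1-based). -/
noncomputable def hookLength (lam : Partition') (i b : ℕ) : ℕ :=
  (lam.parts i - b) + {j : ℕ | i < j ∧ b ≤ lam.parts j}.ncard + 1

/-- The number of hooks of length `s` in `lam`. -/
noncomputable def hookCount (lam : Partition') (s : ℕ) : ℕ :=
  {p : ℕ × ℕ | 1 ≤ p.2 ∧ p.2 ≤ lam.parts p.1 ∧ hookLength lam p.1 p.2 = s}.ncard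

namespace Stmt2

def beta (lam : Partition') (i : ℕ) : ℤ := (lam.parts i : ℤ) - (i + 1)

lemma beta_strictAnti (lam : Partition') : StrictAnti (beta lam) := by
  apply strictAnti_nat_of_succ_lt
  intro n
  have := lam.antitone n (n+1) (Nat.le_succ n)
  unfold beta; push_cast; omega

lemma betaSet_eq (lam : Partition') : betaSet lam = Set.range (beta lam) := rfl

noncomputable def kIdx (lam : Partition') (b : ℕ) : ℕ := sInf {j | lam.parts j < b}

lemma kIdx_spec (lam : Partition') (b : ℕ) (hb : 1 ≤ b) :
    lam.parts (kIdx lam b) < b ∧ ∀ j, j < kIdx lam b → b ≤ lam.parts j := by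
  obtain ⟨N, hN⟩ := lam.finite_support
  have hne : {j | lam.parts j < b}.Nonempty := ⟨N, by simp [hN N le_rfl]; omega⟩
  constructor
  · exact Nat.sInf_mem hne
  · intro j hj
    by_contra h
    exact absurd (Nat.sInf_le (by simpa using Nat.lt_of_not_le h)) (Nat.not_le.2 hj)

lemma setS_eq (lam : Partition') (i b : ℕ) (hb : 1 ≤ b) :
    {j : ℕ | i < j ∧ b ≤ lam.parts j} = Set.Ioo i (kIdx lam b) := by
  obtain ⟨hk1, hk2⟩ := kIdx_spec lam b hb
  ext j
  simp only [Set.mem_setOf_eq, Set.mem_Ioo]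
  constructor
  · rintro ⟨h1, h2⟩
    refine ⟨h1, ?_⟩
    by_contra h
    have := lam.antitone (kIdx lam b) j (Nat.le_of_not_lt h)
    omega
  · rintro ⟨h1, h2⟩
    exact ⟨h1, hk2 j h2⟩

lemma i_lt_kIdx (lam : Partition') (i b : ℕ) (hb : 1 ≤ b) (hbi : b ≤ lam.parts i) :
    i < kIdx lam b := by
  obtain ⟨hk1, hk2⟩ := kIdx_spec lam b hb
  by_contra h
  have := lam.antitone (kIdx lam b) i (Nat.le_of_not_lt h)
  omega

lemma hook_eq (lam : Partition') (i b : ℕ) (hb : 1 ≤ b) (hbi : b ≤ lam.parts i) :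
    (hookLength lam i b : ℤ) = beta lam i - ((b : ℤ) - (kIdx lam b) - 1) := by
  have hik := i_lt_kIdx lam i b hb hbi
  unfold hookLength
  rw [setS_eq lam i b hb]
  rw [← Finset.coe_Ioo, Set.ncard_coe_finset, Nat.card_Ioo]
  unfold beta
  push_cast [hbi]
  omega

/-- a value strictly between `beta (k)` and `beta (k-1)` is not in the beta range -/
lemma notMem_range (lam : Partition') (k : ℕ) (hk : 1 ≤ k) (c : ℤ)
    (h1 : beta lam k < c) (h2 : c < beta lam (k-1)) : c ∉ Set.range (beta lam) := by
  rintro ⟨m, rfl⟩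
  rcases Nat.lt_or_ge m k with h | h
  · have : beta lam (k-1) ≤ beta lam m := (beta_strictAnti lam).antitone (by omega)
    omega
  · have : beta lam m ≤ beta lam k := (beta_strictAnti lam).antitone h
    omega

lemma forward (lam : Partition') (s : ℕ) (hs : 0 < s) (i b : ℕ) (hb : 1 ≤ b)
    (hbi : b ≤ lam.parts i) (hH : hookLength lam i b = s) :
    beta lam i - (s : ℤ) ∉ Set.range (beta lam) := by
  have hik := i_lt_kIdx lam i b hb hbi
  obtain ⟨hk1, hk2⟩ := kIdx_spec lam b hb
  have heq := hook_eq lam i b hb hbi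
  rw [hH] at heq
  have hc : beta lam i - (s : ℤ) = (b : ℤ) - kIdx lam b - 1 := by omega
  rw [hc]
  have hk0 : 1 ≤ kIdx lam b := by omega
  have hlow : beta lam (kIdx lam b) < (b : ℤ) - kIdx lam b - 1 := by
    unfold beta; push_cast; omega
  have hkm1 : b ≤ lam.parts (kIdx lam b - 1) := hk2 _ (by omega)
  have hhigh : ((b : ℤ) - kIdx lam b - 1) < beta lam (kIdx lam b - 1) := by
    unfold beta; push_cast [Nat.cast_sub hk0]; omega
  exact notMem_range lam (kIdx lam b) hk0 _ hlow hhigh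

lemma backward (lam : Partition') (s : ℕ) (hs : 0 < s) (i : ℕ)
    (hc : beta lam i - (s : ℤ) ∉ Set.range (beta lam)) :
    ∃ b : ℕ, 1 ≤ b ∧ b ≤ lam.parts i ∧ hookLength lam i b = s := by
  set c : ℤ := beta lam i - s with hcdef
  obtain ⟨N, hN⟩ := lam.finite_support
  have hne : {j | beta lam j < c}.Nonempty := by
    refine ⟨max N (i + s + 1), ?_⟩
    have h0 : lam.parts (max N (i+s+1)) = 0 := hN _ (le_max_left _ _)
    have : (i:ℤ) + s + 1 ≤ (max N (i+s+1) : ℕ) := by exact_mod_cast Nat.le_trans (le_refl _) (by push_cast; exact_mod_cast le_max_right N (i+s+1))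
    simp only [Set.mem_setOf_eq, beta, h0, hcdef, beta]
    have hpi : (0:ℤ) ≤ lam.parts i := by positivity
    push_cast
    omega
  set k := sInf {j | beta lam j < c} with hkdef
  have hk1 : beta lam k < c := Nat.sInf_mem hne
  have hk2 : ∀ j, j < k → c < beta lam j := by
    intro j hj
    have h1 : ¬ beta lam j < c := fun h => absurd (Nat.sInf_le h) (Nat.not_le.2 hj)
    have h2 : beta lam j ≠ c := fun h => hc ⟨j, by omega⟩
    omega
  have hik : i < k := by
    rcases Nat.lt_or_ge i k with h | h
    · exact h
    · exfalso
      have hmono : beta lam i ≤ beta lam k := (beta_strictAnti lam).antitone h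
      omega
  have hk0 : 1 ≤ k := by omega
  have hbZ : (lam.parts k : ℤ) < c + k + 1 := by
    have := hk1; unfold beta at this; omega
  have hbpos : (1:ℤ) ≤ c + k + 1 := by
    have : (0:ℤ) ≤ lam.parts k := by positivity
    omega
  set b : ℕ := (c + k + 1).toNat with hbdef
  have hbcast : (b : ℤ) = c + k + 1 := Int.toNat_of_nonneg (by omega)
  have hb1 : 1 ≤ b := by omega
  have hkm1 : c < beta lam (k-1) := hk2 _ (by omega)
  have hbkm1 : b ≤ lam.parts (k-1) := by
    unfold beta at hkm1
    have : ((k:ℤ) - 1) = ((k-1 : ℕ) : ℤ) := by push_cast [Nat.cast_sub hk0]; ring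
    push_cast [Nat.cast_sub hk0] at hkm1
    omega
  have hbi : b ≤ lam.parts i := le_trans hbkm1 (lam.antitone i (k-1) (by omega))
  have hkIdx : kIdx lam b = k := by
    obtain ⟨hs1, hs2⟩ := kIdx_spec lam b hb1
    have hle : kIdx lam b ≤ k := Nat.sInf_le (by simp only [Set.mem_setOf_eq]; omega)
    rcases Nat.eq_or_lt_of_le hle with h | h
    · exact h
    · have h1 : b ≤ lam.parts (kIdx lam b) :=
        le_trans hbkm1 (lam.antitone (kIdx lam b) (k-1) (by omega))
      omega
  refine ⟨b, hb1, hbi, ?_⟩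
  have heq := hook_eq lam i b hb1 hbi
  rw [hkIdx] at heq
  have : (hookLength lam i b : ℤ) = s := by omega
  exact_mod_cast this

lemma column_unique (lam : Partition') (i b b' : ℕ) (hb : 1 ≤ b) (hbi : b ≤ lam.parts i)
    (hb' : 1 ≤ b') (hbi' : b' ≤ lam.parts i)
    (h : (b : ℤ) - kIdx lam b = (b' : ℤ) - kIdx lam b') : b = b' := by
  obtain ⟨hs1, hs2⟩ := kIdx_spec lam b hb
  obtain ⟨hs1', hs2'⟩ := kIdx_spec lam b' hb'
  rcases lt_trichotomy b b' with hlt | heq | hgt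
  · -- then kIdx b ≤ kIdx b', and strict ineq impossible
    have hk : kIdx lam b < kIdx lam b' := by omega
    have := hs2' (kIdx lam b) hk
    omega
  · exact heq
  · have hk : kIdx lam b' < kIdx lam b := by omega
    have := hs2 (kIdx lam b') hk
    omega

end Stmt2

/-- the number of `s`-hooks of `λ` equals the number of `b ∈ B(λ)`
with `b - s ∉ B(λ)`. -/
theorem stmt_2 (s : ℕ) (hs : 0 < s) (lam : Partition') :
    hookCount lam s = {b : ℤ | b ∈ betaSet lam ∧ b - (s : ℤ) ∉ betaSet lam}.ncard := by
  classical
  set P : Set (ℕ × ℕ) :=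
    {p : ℕ × ℕ | 1 ≤ p.2 ∧ p.2 ≤ lam.parts p.1 ∧ hookLength lam p.1 p.2 = s} with hP
  have himg : {b : ℤ | b ∈ betaSet lam ∧ b - (s : ℤ) ∉ betaSet lam}
      = (fun p : ℕ × ℕ => Stmt2.beta lam p.1) '' P := by
    ext c
    simp only [Set.mem_setOf_eq, Set.mem_image, Stmt2.betaSet_eq]
    constructor
    · rintro ⟨⟨i, rfl⟩, hnot⟩
      obtain ⟨b, hb1, hb2, hb3⟩ := Stmt2.backward lam s hs i hnot
      exact ⟨(i, b), ⟨hb1, hb2, hb3⟩, rfl⟩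
    · rintro ⟨⟨i, b⟩, ⟨hb1, hb2, hb3⟩, rfl⟩
      exact ⟨⟨i, rfl⟩, Stmt2.forward lam s hs i b hb1 hb2 hb3⟩
  have hinj : Set.InjOn (fun p : ℕ × ℕ => Stmt2.beta lam p.1) P := by
    rintro ⟨i, b⟩ ⟨hb1, hb2, hb3⟩ ⟨i', b'⟩ ⟨hb1', hb2', hb3'⟩ hfe
    simp only at hfe
    have hii : i = i' := (Stmt2.beta_strictAnti lam).injective hfe
    subst hii
    have heq := Stmt2.hook_eq lam i b hb1 hb2
    have heq' := Stmt2.hook_eq lam i b' hb1' hb2'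
    rw [hb3] at heq; rw [hb3'] at heq'
    have : b = b' := Stmt2.column_unique lam i b b' hb1 hb2 hb1' hb2' (by omega)
    simp [this]
  rw [himg, Set.ncard_image_of_injOn hinj]
  rfl
end

section
/- Let P be a set of partitions, A a finite set of positive integers whose gcd is 1, and f : A → ℕ such that every λ ∈ P has fewer than f(a) hooks of length a for each a ∈ A. Then there exists M such that every λ ∈ P has fewer than M removable nodes. -/
/-- The number of hooks of length `a` in `λ`, via the beta-set characterisation:
the number of `b ∈ B(λ)` with `b - a ∉ B(λ)`. -/
noncomputable def hk (lam : Partition') (a : ℕ) : ℕ :=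
  {b : ℤ | b ∈ betaSet lam ∧ b - (a : ℤ) ∉ betaSet lam}.ncard

/-- The number of removable nodes of `λ`. -/
noncomputable def removableCount (lam : Partition') : ℕ :=
  {i : ℕ | lam.parts (i + 1) < lam.parts i}.ncard

namespace Stmt5Aux

/-- The beta numbers. -/
def beta (lam : Partition') (i : ℕ) : ℤ := (lam.parts i : ℤ) - (i + 1)

lemma betaSet_eq (lam : Partition') : betaSet lam = Set.range (beta lam) := rfl

lemma beta_strictAnti (lam : Partition') : StrictAnti (beta lam) := by
  intro i j hij
  have h1 : lam.parts j ≤ lam.parts i := lam.antitone i j hij.le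
  unfold beta
  omega

/-- A bound beyond which all parts vanish. -/
noncomputable def sbound (lam : Partition') : ℕ := lam.finite_support.choose

lemma sbound_spec (lam : Partition') : ∀ i : ℕ, sbound lam ≤ i → lam.parts i = 0 :=
  lam.finite_support.choose_spec

lemma mem_low (lam : Partition') {x : ℤ} (hx : x ≤ -(sbound lam : ℤ) - 1) :
    x ∈ betaSet lam := by
  refine ⟨(-x - 1).toNat, ?_⟩
  have h1 : ((-x - 1).toNat : ℤ) = -x - 1 := Int.toNat_of_nonneg (by omega)
  have h0 : lam.parts (-x - 1).toNat = 0 := sbound_spec lam _ (by omega)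
  simp only [h0]
  omega

lemma mem_high (lam : Partition') {b : ℤ} (hb : b ∈ betaSet lam) : b ≤ beta lam 0 := by
  obtain ⟨i, rfl⟩ := hb
  exact (beta_strictAnti lam).antitone (Nat.zero_le i)

lemma mem_shiftSet {S : Set ℤ} {t x : ℤ} : x ∈ shiftSet S t ↔ x - t ∈ S := by
  constructor
  · rintro ⟨y, hy, rfl⟩; simpa using hy
  · intro h; exact ⟨x - t, h, by ring⟩

lemma shiftSet_zero (S : Set ℤ) : shiftSet S 0 = S := by
  ext x; simp [mem_shiftSet]

lemma shiftSet_shiftSet (S : Set ℤ) (s t : ℤ) :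
    shiftSet (shiftSet S s) t = shiftSet S (s + t) := by
  ext x
  simp only [mem_shiftSet]
  rw [sub_sub, add_comm t s]

lemma shiftSet_diff (S T : Set ℤ) (t : ℤ) :
    shiftSet (S \ T) t = shiftSet S t \ shiftSet T t :=
  Set.image_diff (add_left_injective t) S T

lemma ncard_shiftSet (S : Set ℤ) (t : ℤ) : (shiftSet S t).ncard = S.ncard :=
  Set.ncard_image_of_injective S (add_left_injective t)

lemma finite_shiftSet {S : Set ℤ} (h : S.Finite) (t : ℤ) : (shiftSet S t).Finite :=
  h.image _

lemma finite_diff_right (lam : Partition') (t : ℤ) :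
    (betaSet lam \ shiftSet (betaSet lam) t).Finite := by
  apply Set.Finite.subset (Set.finite_Ioc (t - (sbound lam : ℤ) - 1) (beta lam 0))
  rintro b ⟨hb, hbn⟩
  have h1 : ¬(b - t ≤ -(sbound lam : ℤ) - 1) := fun h => hbn (mem_shiftSet.mpr (mem_low lam h))
  have h2 := mem_high lam hb
  simp only [Set.mem_Ioc]
  omega

lemma finite_diff_left (lam : Partition') (t : ℤ) :
    (shiftSet (betaSet lam) t \ betaSet lam).Finite := by
  apply Set.Finite.subset (Set.finite_Ioc (-(sbound lam : ℤ) - 1) (beta lam 0 + t))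
  rintro x ⟨hx, hxn⟩
  have h1 : ¬(x ≤ -(sbound lam : ℤ) - 1) := fun h => hxn (mem_low lam h)
  have h2 := mem_high lam (mem_shiftSet.mp hx)
  simp only [Set.mem_Ioc]
  omega

/-- The symmetric difference count. -/
noncomputable def dd (lam : Partition') (t : ℤ) : ℕ :=
  (betaSet lam \ shiftSet (betaSet lam) t).ncard + (shiftSet (betaSet lam) t \ betaSet lam).ncard

lemma dd_zero (lam : Partition') : dd lam 0 = 0 := by
  unfold dd
  rw [shiftSet_zero]
  simp

lemma dd_neg (lam : Partition') (t : ℤ) : dd lam (-t) = dd lam t := by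
  have e1 : betaSet lam \ shiftSet (betaSet lam) (-t)
      = shiftSet (shiftSet (betaSet lam) t \ betaSet lam) (-t) := by
    rw [shiftSet_diff, shiftSet_shiftSet]
    rw [show t + -t = 0 by ring, shiftSet_zero]
  have e2 : shiftSet (betaSet lam) (-t) \ betaSet lam
      = shiftSet (betaSet lam \ shiftSet (betaSet lam) t) (-t) := by
    rw [shiftSet_diff, shiftSet_shiftSet]
    rw [show t + -t = 0 by ring, shiftSet_zero]
  unfold dd
  rw [e1, e2, ncard_shiftSet, ncard_shiftSet, Nat.add_comm]

lemma dd_add (lam : Partition') (s t : ℤ) : dd lam (s + t) ≤ dd lam s + dd lam t := by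
  set B := betaSet lam with hB2
  have key : shiftSet (shiftSet B t) s = shiftSet B (s + t) := by
    rw [shiftSet_shiftSet, add_comm]
  have sub1 : B \ shiftSet B (s + t) ⊆
      (B \ shiftSet B s) ∪ shiftSet (B \ shiftSet B t) s := by
    rintro b ⟨hb, hbn⟩
    by_cases h : b ∈ shiftSet B s
    · right
      rw [shiftSet_diff, key]
      exact ⟨h, hbn⟩
    · left; exact ⟨hb, h⟩
  have sub2 : shiftSet B (s + t) \ B ⊆
      shiftSet (shiftSet B t \ B) s ∪ (shiftSet B s \ B) := by
    rintro x ⟨hx, hxn⟩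
    by_cases h : x ∈ shiftSet B s
    · right; exact ⟨h, hxn⟩
    · left
      rw [shiftSet_diff, key]
      exact ⟨hx, h⟩
  have f1 := finite_diff_right lam s
  have f2 := finite_diff_right lam t
  have f3 := finite_diff_left lam s
  have f4 := finite_diff_left lam t
  have c1 : (B \ shiftSet B (s + t)).ncard ≤ (B \ shiftSet B s).ncard + (B \ shiftSet B t).ncard := calc
    (B \ shiftSet B (s + t)).ncard
        ≤ ((B \ shiftSet B s) ∪ shiftSet (B \ shiftSet B t) s).ncard :=
          Set.ncard_le_ncard sub1 (f1.union (finite_shiftSet f2 s))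
    _ ≤ (B \ shiftSet B s).ncard + (shiftSet (B \ shiftSet B t) s).ncard :=
          Set.ncard_union_le _ _
    _ = (B \ shiftSet B s).ncard + (B \ shiftSet B t).ncard := by rw [ncard_shiftSet]
  have c2 : (shiftSet B (s + t) \ B).ncard ≤ (shiftSet B t \ B).ncard + (shiftSet B s \ B).ncard := calc
    (shiftSet B (s + t) \ B).ncard
        ≤ (shiftSet (shiftSet B t \ B) s ∪ (shiftSet B s \ B)).ncard :=
          Set.ncard_le_ncard sub2 ((finite_shiftSet f4 s).union f3)
    _ ≤ (shiftSet (shiftSet B t \ B) s).ncard + (shiftSet B s \ B).ncard :=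
          Set.ncard_union_le _ _
    _ = (shiftSet B t \ B).ncard + (shiftSet B s \ B).ncard := by rw [ncard_shiftSet]
  unfold dd
  rw [← hB2] at *
  omega

lemma dd_nsmul (lam : Partition') (n : ℕ) (t : ℤ) : dd lam ((n : ℤ) * t) ≤ n * dd lam t := by
  induction n with
  | zero => simp [dd_zero]
  | succ n ih =>
      have : ((n + 1 : ℕ) : ℤ) * t = (n : ℤ) * t + t := by push_cast; ring
      rw [this]
      calc dd lam ((n : ℤ) * t + t) ≤ dd lam ((n : ℤ) * t) + dd lam t := dd_add lam _ _
        _ ≤ n * dd lam t + dd lam t := by omega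
        _ = (n + 1) * dd lam t := by ring

lemma dd_zsmul (lam : Partition') (z : ℤ) (t : ℤ) :
    dd lam (z * t) ≤ z.natAbs * dd lam t := by
  rcases Int.natAbs_eq z with h | h
  · rw [show z * t = (z.natAbs : ℤ) * t by rw [← h]]
    exact dd_nsmul lam _ _
  · rw [show z * t = -((z.natAbs : ℤ) * t) by rw [← neg_mul, ← h], dd_neg]
    exact dd_nsmul lam _ _

lemma dd_sum (lam : Partition') (A : Finset ℕ) (g : ℕ → ℤ) :
    dd lam (∑ a ∈ A, g a * (a : ℤ)) ≤ ∑ a ∈ A, (g a).natAbs * dd lam (a : ℤ) := by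
  classical
  induction A using Finset.induction_on with
  | empty => simp [dd_zero]
  | @insert x s hx ih =>
      rw [Finset.sum_insert hx, Finset.sum_insert hx]
      calc dd lam (g x * (x : ℤ) + ∑ a ∈ s, g a * (a : ℤ))
          ≤ dd lam (g x * (x : ℤ)) + dd lam (∑ a ∈ s, g a * (a : ℤ)) := dd_add lam _ _
        _ ≤ (g x).natAbs * dd lam (x : ℤ) + ∑ a ∈ s, (g a).natAbs * dd lam (a : ℤ) := by
            have h1 := dd_zsmul lam (g x) (x : ℤ)
            omega

/-- The key counting identity: `|(B+a) \\ B| = |B \\ (B+a)| + a` for `a : ℕ`. -/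
lemma shift_diff_ncard (lam : Partition') (a : ℕ) :
    (shiftSet (betaSet lam) (a : ℤ) \ betaSet lam).ncard
      = (betaSet lam \ shiftSet (betaSet lam) (a : ℤ)).ncard + a := by
  set N : ℤ := (sbound lam : ℤ) with hN
  set m : ℤ := -N - 1 - (a : ℤ) with hm
  set K : ℤ := beta lam 0 + (a : ℤ) with hK
  have hbeta0 : (-1 : ℤ) ≤ beta lam 0 := by unfold beta; omega
  set B := betaSet lam with hB
  set X : Set ℤ := B ∩ Set.Ioc m K with hX
  set Y : Set ℤ := shiftSet B (a : ℤ) ∩ Set.Ioc m K with hY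
  have hXfin : X.Finite := (Set.finite_Ioc m K).inter_of_right _
  have hYfin : Y.Finite := (Set.finite_Ioc m K).inter_of_right _
  have hd1 : B \ shiftSet B (a : ℤ) = X \ Y := by
    ext b
    constructor
    · rintro ⟨hb, hbn⟩
      have h1 : ¬(b - (a : ℤ) ≤ -N - 1) := fun h => hbn (mem_shiftSet.mpr (mem_low lam h))
      have h2 := mem_high lam hb
      exact ⟨⟨hb, by simp only [Set.mem_Ioc]; omega⟩, fun hy => hbn hy.1⟩
    · rintro ⟨⟨hb, hioc⟩, hny⟩
      refine ⟨hb, fun hs => hny ⟨hs, hioc⟩⟩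
  have hd2 : shiftSet B (a : ℤ) \ B = Y \ X := by
    ext x
    constructor
    · rintro ⟨hx, hxn⟩
      have h1 : ¬(x ≤ -N - 1) := fun h => hxn (mem_low lam h)
      have h2 := mem_high lam (mem_shiftSet.mp hx)
      exact ⟨⟨hx, by simp only [Set.mem_Ioc]; omega⟩, fun hy => hxn hy.1⟩
    · rintro ⟨⟨hx, hioc⟩, hnx⟩
      refine ⟨hx, fun hb => hnx ⟨hb, hioc⟩⟩
  have hYcard : Y.ncard = X.ncard + a := by
    have e1 : Y = shiftSet (B ∩ Set.Ioc (m - a) (K - a)) (a : ℤ) := by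
      ext x
      simp only [hY, mem_shiftSet, Set.mem_inter_iff, Set.mem_Ioc]
      constructor
      · rintro ⟨h1, h2, h3⟩; exact ⟨h1, by omega, by omega⟩
      · rintro ⟨h1, h2, h3⟩; exact ⟨h1, by omega, by omega⟩
    have e2 : B ∩ Set.Ioc (m - a) (K - a)
        = Set.Ioc (m - a) m ∪ X := by
      have hsplit : Set.Ioc (m - a) (K - a) = Set.Ioc (m - a) m ∪ Set.Ioc m (K - a) :=
        (Set.Ioc_union_Ioc_eq_Ioc (by omega) (by omega)).symm
      have hlowsub : Set.Ioc (m - a) m ⊆ B := fun x hx => mem_low lam (by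
        have := hx.2; omega)
      have hXeq : B ∩ Set.Ioc m (K - a) = X := by
        ext b
        simp only [hX, Set.mem_inter_iff, Set.mem_Ioc]
        constructor
        · rintro ⟨hb, h1, h2⟩; exact ⟨hb, h1, by omega⟩
        · rintro ⟨hb, h1, h2⟩
          have := mem_high lam hb
          exact ⟨hb, h1, by omega⟩
      rw [hsplit, Set.inter_union_distrib_left, hXeq,
        Set.inter_eq_self_of_subset_right hlowsub]
    have hdisj : Disjoint (Set.Ioc (m - a) m) X := by
      rw [Set.disjoint_left]
      rintro x hx ⟨_, hx2⟩
      have h1 := hx.2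
      have h2 := (Set.mem_Ioc.mp hx2).1
      omega
    have hIoc_card : (Set.Ioc (m - a) m).ncard = a := by
      rw [← Finset.coe_Ioc, Set.ncard_coe_finset, Int.card_Ioc]
      omega
    rw [e1, ncard_shiftSet, e2,
      Set.ncard_union_eq hdisj (Set.finite_Ioc _ _) hXfin, hIoc_card]
    omega
  have e3 := Set.ncard_inter_add_ncard_diff_eq_ncard X Y hXfin
  have e4 := Set.ncard_inter_add_ncard_diff_eq_ncard Y X hYfin
  rw [Set.inter_comm Y X] at e4
  rw [hd1, hd2]
  omega

lemma hk_eq (lam : Partition') (a : ℕ) :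
    hk lam a = (betaSet lam \ shiftSet (betaSet lam) (a : ℤ)).ncard := by
  unfold hk
  congr 1
  ext b
  simp [Set.mem_diff, mem_shiftSet]

lemma dd_eq (lam : Partition') (a : ℕ) : dd lam (a : ℤ) = 2 * hk lam a + a := by
  unfold dd
  rw [shift_diff_ncard, ← hk_eq]
  ring

lemma removable_eq (lam : Partition') : removableCount lam = hk lam 1 := by
  have hkey : {b : ℤ | b ∈ betaSet lam ∧ b - (1 : ℤ) ∉ betaSet lam}
      = beta lam '' {i : ℕ | lam.parts (i + 1) < lam.parts i} := by
    ext b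
    constructor
    · rintro ⟨hb, hbn⟩
      obtain ⟨i, rfl⟩ := hb
      refine ⟨i, ?_, rfl⟩
      show lam.parts (i + 1) < lam.parts i
      have hle := lam.antitone i (i + 1) (by omega)
      by_contra hc
      have heq : lam.parts (i + 1) = lam.parts i := by omega
      apply hbn
      refine ⟨i + 1, ?_⟩
      show (lam.parts (i + 1) : ℤ) - ((i : ℤ) + 1 + 1) = _
      rw [heq]
      push_cast
      ring
    · rintro ⟨i, hi, rfl⟩
      have hi' : lam.parts (i + 1) < lam.parts i := hi
      refine ⟨⟨i, rfl⟩, ?_⟩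
      rintro ⟨j, hj⟩
      have hj' : beta lam j = beta lam i - 1 := hj
      rcases le_or_gt j i with h | h
      · have := (beta_strictAnti lam).antitone h
        omega
      · have h1 : i + 1 ≤ j := h
        have h2 : beta lam j ≤ beta lam (i + 1) := (beta_strictAnti lam).antitone h1
        have h3 : beta lam (i + 1) = (lam.parts (i + 1) : ℤ) - (i + 2) := by
          unfold beta; push_cast; ring
        have h4 : beta lam i = (lam.parts i : ℤ) - (i + 1) := rfl
        omega
  unfold removableCount
  rw [show hk lam 1 = {b : ℤ | b ∈ betaSet lam ∧ b - (1 : ℤ) ∉ betaSet lam}.ncard by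
    unfold hk; norm_num]
  rw [hkey, Set.ncard_image_of_injective _ (beta_strictAnti lam).injective]

lemma bezout (A : Finset ℕ) : ∃ z : ℕ → ℤ, ∑ a ∈ A, z a * (a : ℤ) = ((A.gcd id : ℕ) : ℤ) := by
  classical
  induction A using Finset.induction_on with
  | empty => exact ⟨0, by simp⟩
  | @insert x s hx ih =>
      obtain ⟨z, hz⟩ := ih
      set g : ℕ := s.gcd id with hg
      refine ⟨fun n => if n = x then Nat.gcdA x g else z n * Nat.gcdB x g, ?_⟩
      have hgi : (insert x s).gcd id = Nat.gcd x g := by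
        rw [Finset.gcd_insert]; rfl
      rw [Finset.sum_insert hx, hgi]
      beta_reduce
      rw [if_pos rfl]
      have hcong : ∀ a ∈ s,
          (if a = x then Nat.gcdA x g else z a * Nat.gcdB x g) * (a : ℤ)
            = (z a * (a : ℤ)) * Nat.gcdB x g := by
        intro a ha
        rw [if_neg (by rintro rfl; exact hx ha)]
        ring
      rw [Finset.sum_congr rfl hcong, ← Finset.sum_mul, hz]
      have := Nat.gcd_eq_gcd_ab x g
      push_cast [this]
      ring

end Stmt5Aux

/-- if `P` is a set of partitions, `A` a finite set of positive integers
with gcd `1`, and every `λ ∈ P` has fewer than `f a` hooks of length `a` for each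
`a ∈ A`, then the number of removable nodes of members of `P` is bounded. -/
theorem stmt_5 (P : Set Partition') (A : Finset ℕ) (hpos : ∀ a ∈ A, 0 < a)
    (hgcd : A.gcd id = 1) (f : ℕ → ℕ)
    (hf : ∀ lam ∈ P, ∀ a ∈ A, hk lam a < f a) :
    ∃ M : ℕ, ∀ lam ∈ P, removableCount lam < M := by
  classical
  obtain ⟨z, hz⟩ := Stmt5Aux.bezout A
  rw [hgcd] at hz
  refine ⟨(∑ a ∈ A, (z a).natAbs * (2 * f a + a)) + 1, ?_⟩
  intro lam hlam
  rw [Stmt5Aux.removable_eq]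
  have h1 : hk lam 1 ≤ Stmt5Aux.dd lam 1 := by
    have := Stmt5Aux.dd_eq lam 1
    push_cast at this
    omega
  have h2 : Stmt5Aux.dd lam 1 ≤ ∑ a ∈ A, (z a).natAbs * Stmt5Aux.dd lam (a : ℤ) := by
    have := Stmt5Aux.dd_sum lam A z
    rw [hz] at this
    simpa using this
  have h3 : ∑ a ∈ A, (z a).natAbs * Stmt5Aux.dd lam (a : ℤ)
      ≤ ∑ a ∈ A, (z a).natAbs * (2 * f a + a) := by
    apply Finset.sum_le_sum
    intro a ha
    have hfa := hf lam hlam a ha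
    have := Stmt5Aux.dd_eq lam a
    have : Stmt5Aux.dd lam (a : ℤ) ≤ 2 * f a + a := by omega
    exact Nat.mul_le_mul_left _ this
  omega
end

section
/- Suppose c₁, c₂, d₁, d₂ ∈ ℤ with c₁ - c₂ ≥ 0 > d₁ - d₂, and set a = c₁ - c₂ - d₁ + d₂. If a bipartition (λ, μ) satisfies B(λ)+c₁ ⊇ B(μ)+c₂ and B(λ)+d₁ ⊆ B(μ)+d₂, then B(λ)+(c₁-c₂) ⊇ B(μ) ⊇ B(λ)+(c₁-c₂-a), and in particular both λ and μ are a-cores. -/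
/-- `λ` is an `a`-core, for an integer `a`: `B(λ) ⊇ B(λ) - a`. -/
def IsCoreZ (lam : Partition') (a : ℤ) : Prop :=
  ∀ x ∈ betaSet lam, x - a ∈ betaSet lam

/-- if `c₁ - c₂ ≥ 0 > d₁ - d₂`, `a = c₁ - c₂ - d₁ + d₂`,
`B(λ)+c₁ ⊇ B(μ)+c₂` and `B(λ)+d₁ ⊆ B(μ)+d₂`, then
`B(λ)+(c₁-c₂) ⊇ B(μ) ⊇ B(λ)+(c₁-c₂-a)`, and both `λ` and `μ` are `a`-cores. -/
theorem stmt_6 (c₁ c₂ d₁ d₂ : ℤ) (h1 : 0 ≤ c₁ - c₂) (h2 : d₁ - d₂ < 0)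
    (lam mu : Partition')
    (hc : shiftSet (betaSet mu) c₂ ⊆ shiftSet (betaSet lam) c₁)
    (hd : shiftSet (betaSet lam) d₁ ⊆ shiftSet (betaSet mu) d₂) :
    (betaSet mu ⊆ shiftSet (betaSet lam) (c₁ - c₂) ∧
      shiftSet (betaSet lam) (c₁ - c₂ - (c₁ - c₂ - d₁ + d₂)) ⊆ betaSet mu) ∧
    IsCoreZ lam (c₁ - c₂ - d₁ + d₂) ∧ IsCoreZ mu (c₁ - c₂ - d₁ + d₂) := by
  have H1 : betaSet mu ⊆ shiftSet (betaSet lam) (c₁ - c₂) := by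
    intro x hx
    obtain ⟨y, hy, hxy⟩ := hc ⟨x, hx, rfl⟩
    exact ⟨y, hy, by dsimp at hxy ⊢; linarith⟩
  have H2 : shiftSet (betaSet lam) (d₁ - d₂) ⊆ betaSet mu := by
    rintro x ⟨y, hy, rfl⟩
    obtain ⟨z, hz, hzy⟩ := hd ⟨y, hy, rfl⟩
    have h : z = y + (d₁ - d₂) := by dsimp at hzy; linarith
    show y + (d₁ - d₂) ∈ betaSet mu
    rw [← h]; exact hz
  have heq : c₁ - c₂ - (c₁ - c₂ - d₁ + d₂) = d₁ - d₂ := by ring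
  refine ⟨⟨H1, heq ▸ H2⟩, ?_, ?_⟩
  · intro x hx
    obtain ⟨y, hy, hxy⟩ := H1 (H2 ⟨x, hx, rfl⟩)
    have h : y = x - (c₁ - c₂ - d₁ + d₂) := by dsimp at hxy; linarith
    rw [← h]; exact hy
  · intro x hx
    obtain ⟨y, hy, hxy⟩ := H1 hx
    have h : x - (c₁ - c₂ - d₁ + d₂) = y + (d₁ - d₂) := by dsimp at hxy; linarith
    rw [h]; exact H2 ⟨y, hy, rfl⟩
end

section
/- Suppose c₁, c₂, d₁, d₂ ∈ ℤ with c₁ - c₂ > d₁ - d₂ ≥ 0, and set a = c₁ - c₂ - d₁ + d₂ > 0. If (λ, μ) satisfies B(λ)+(c₁-c₂) ⊇ B(μ) and B(λ)+(d₁-d₂) ⊇ B(μ), then μ has at most d₁ - d₂ hooks of length a. -/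
/-- The number of hooks of length `a` (an integer) in `λ`, via beta-sets. -/
noncomputable def hkZ (lam : Partition') (a : ℤ) : ℕ :=
  {b : ℤ | b ∈ betaSet lam ∧ b - a ∉ betaSet lam}.ncard

/-!
Proof idea: for `d ≥ 0` and `B(μ) ⊆ B(λ) + d`, the two beta-sets contain every integer below some
bound `-n`, and above it `B(λ) + d` has `n + d` elements while `B(μ)` has `n`; so `B(λ) + d`
exceeds `B(μ)` by exactly `d` elements. If `b` labels a hook of length `a` of `μ`, then
`b ∈ B(μ) ⊆ B(λ) + (a + d)`, so `b - a ∈ B(λ) + d` while `b - a ∉ B(μ)`: the map `b ↦ b - a`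
sends the hooks of length `a` injectively into those `d` extra elements.
-/

open Set

lemma shiftSet_inter_Ici (S : Set ℤ) (c x : ℤ) :
    shiftSet S c ∩ Ici x = shiftSet (S ∩ Ici (x - c)) c := by
  ext y
  simp only [shiftSet, mem_inter_iff, mem_image, mem_Ici]
  constructor
  · rintro ⟨⟨z, hz, rfl⟩, hx⟩
    exact ⟨z, ⟨hz, by omega⟩, rfl⟩
  · rintro ⟨z, ⟨hz, hzx⟩, rfl⟩
    exact ⟨⟨z, hz, rfl⟩, by omega⟩

lemma encard_shiftSet (S : Set ℤ) (c : ℤ) : (shiftSet S c).encard = S.encard :=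
  (add_left_injective c).encard_image S

namespace Partition'

def beta (lam : Partition') (i : ℕ) : ℤ := (lam.parts i : ℤ) - (i + 1)

lemma beta_strictAnti (lam : Partition') : StrictAnti lam.beta :=
  strictAnti_nat_of_succ_lt fun i => by
    have := lam.antitone i (i + 1) i.le_succ
    simp only [beta]
    push_cast
    omega

lemma betaSet_eq_range (lam : Partition') : betaSet lam = range lam.beta := rfl

variable {lam : Partition'} {N : ℕ}

lemma betaSet_inter_Ici (hN : ∀ i, N ≤ i → lam.parts i = 0) {m : ℕ} (hm : N ≤ m) :
    betaSet lam ∩ Ici (-(m : ℤ)) = lam.beta '' Iio m := by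
  ext x
  simp only [betaSet_eq_range, mem_inter_iff, mem_range, mem_Ici, mem_image, mem_Iio]
  constructor
  · rintro ⟨⟨i, rfl⟩, hi⟩
    refine ⟨i, ?_, rfl⟩
    by_contra! him
    have := hN i (hm.trans him)
    simp only [beta, this] at hi
    omega
  · rintro ⟨i, hi, rfl⟩
    exact ⟨⟨i, rfl⟩, by simp only [beta]; omega⟩

lemma encard_betaSet_inter_Ici (hN : ∀ i, N ≤ i → lam.parts i = 0) {m : ℕ} (hm : N ≤ m) :
    (betaSet lam ∩ Ici (-(m : ℤ))).encard = m := by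
  rw [betaSet_inter_Ici hN hm, lam.beta_strictAnti.injective.encard_image, ← Finset.coe_range,
    encard_coe_eq_coe_finsetCard, Finset.card_range]

lemma mem_betaSet_of_lt (hN : ∀ i, N ≤ i → lam.parts i = 0) {x : ℤ} (hx : x < -(N : ℤ)) :
    x ∈ betaSet lam := by
  refine ⟨(-x - 1).toNat, ?_⟩
  show (lam.parts _ : ℤ) - _ = x
  rw [hN _ (by omega)]
  omega

end Partition'

open Partition'

lemma encard_shiftSet_betaSet_sdiff {lam mu : Partition'} {d : ℤ} (hd : 0 ≤ d)
    (hsub : betaSet mu ⊆ shiftSet (betaSet lam) d) :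
    (shiftSet (betaSet lam) d \ betaSet mu).encard = d.toNat := by
  obtain ⟨Nl, hNl⟩ := lam.finite_support
  obtain ⟨Nm, hNm⟩ := mu.finite_support
  set n := max Nl Nm
  have hlam : (shiftSet (betaSet lam) d ∩ Ici (-(n : ℤ))).encard = n + d.toNat := by
    rw [shiftSet_inter_Ici, encard_shiftSet,
      show -(n : ℤ) - d = -((n + d.toNat : ℕ) : ℤ) by omega, encard_betaSet_inter_Ici hNl (by omega)]
    push_cast
    rfl
  have hmu : (betaSet mu ∩ Ici (-(n : ℤ))).encard = n :=
    encard_betaSet_inter_Ici hNm (le_max_right _ _)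
  have htrunc : shiftSet (betaSet lam) d \ betaSet mu =
      (shiftSet (betaSet lam) d ∩ Ici (-(n : ℤ))) \ (betaSet mu ∩ Ici (-(n : ℤ))) := by
    ext x
    simp only [mem_sdiff, mem_inter_iff, mem_Ici]
    constructor
    · rintro ⟨hx, hxmu⟩
      have : -(n : ℤ) ≤ x := by
        by_contra! h
        exact hxmu (mem_betaSet_of_lt hNm (by omega))
      exact ⟨⟨hx, this⟩, fun h => hxmu h.1⟩
    · rintro ⟨⟨hx, hxn⟩, hxmu⟩
      exact ⟨hx, fun h => hxmu ⟨h, hxn⟩⟩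
  have hsplit := encard_sdiff_add_encard_of_subset (inter_subset_inter_left (Ici (-(n : ℤ))) hsub)
  rw [← htrunc, hlam, hmu, add_comm (n : ℕ∞)] at hsplit
  exact ENat.add_left_injective_of_ne_top (ENat.natCast_ne_top n) hsplit

lemma hkZ_le_encard_shiftSet_betaSet_sdiff {lam mu : Partition'} {a d : ℤ}
    (hsub : betaSet mu ⊆ shiftSet (betaSet lam) (a + d)) :
    (hkZ mu a : ℕ∞) ≤ (shiftSet (betaSet lam) d \ betaSet mu).encard := by
  refine (ncard_le_encard _).trans
    (encard_le_encard_of_injOn (f := (· - a)) ?_ sub_left_injective.injOn)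
  rintro b ⟨hb, hba⟩
  obtain ⟨y, hy, rfl⟩ := hsub hb
  exact ⟨⟨y, hy, by ring⟩, hba⟩

theorem stmt_7_general (c₁ c₂ d₁ d₂ : ℤ) (h2 : 0 ≤ d₁ - d₂)
    (lam mu : Partition')
    (hc : betaSet mu ⊆ shiftSet (betaSet lam) (c₁ - c₂))
    (hd : betaSet mu ⊆ shiftSet (betaSet lam) (d₁ - d₂)) :
    (hkZ mu (c₁ - c₂ - d₁ + d₂) : ℤ) ≤ d₁ - d₂ := by
  have hc' : betaSet mu ⊆ shiftSet (betaSet lam) ((c₁ - c₂ - d₁ + d₂) + (d₁ - d₂)) := by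
    rwa [show c₁ - c₂ - d₁ + d₂ + (d₁ - d₂) = c₁ - c₂ by ring]
  have hle := hkZ_le_encard_shiftSet_betaSet_sdiff hc'
  rw [encard_shiftSet_betaSet_sdiff h2 hd, Nat.cast_le] at hle
  omega

/-- if `c₁ - c₂ > d₁ - d₂ ≥ 0`, `a = c₁ - c₂ - d₁ + d₂ > 0`, and
`B(λ)+(c₁-c₂) ⊇ B(μ)` and `B(λ)+(d₁-d₂) ⊇ B(μ)`, then `μ` has at most
`d₁ - d₂` hooks of length `a`. -/
theorem stmt_7 (c₁ c₂ d₁ d₂ : ℤ) (h1 : d₁ - d₂ < c₁ - c₂) (h2 : 0 ≤ d₁ - d₂)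
    (lam mu : Partition')
    (hc : betaSet mu ⊆ shiftSet (betaSet lam) (c₁ - c₂))
    (hd : betaSet mu ⊆ shiftSet (betaSet lam) (d₁ - d₂)) :
    (hkZ mu (c₁ - c₂ - d₁ + d₂) : ℤ) ≤ d₁ - d₂ :=
  stmt_7_general c₁ c₂ d₁ d₂ h2 lam mu hc hd
end

section
/- Let s ≥ 2 and 0 ≤ a < s. A pair of s-core partitions (λ, μ) satisfies B(λ) + e ⊇ B(μ) ⊇ B(λ) + e - s (where e is the residue of -a mod s appropriately normalized; here with c = 0, d = a so e = s - a when a > 0 and e = 0 when a = 0) if and only if β_i(μ) + a ∈ {β_{i+a}(λ), β_{i+a}(λ) + s} for every i ∈ ℤ/sℤ. -/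
/-- `λ` is an `s`-core (beta-set characterisation). -/
def IsCore (lam : Partition') (s : ℕ) : Prop :=
  ∀ x ∈ betaSet lam, x - (s : ℤ) ∈ betaSet lam

/-- `x` is the least element of the residue class `i` mod `s` not lying in `B(λ)`,
i.e. `x = β_i(λ)`. -/
def IsBetaNum (s : ℕ) (lam : Partition') (i : ZMod s) (x : ℤ) : Prop :=
  x ∉ betaSet lam ∧ (x : ZMod s) = i ∧
    ∀ y : ℤ, y < x → (y : ZMod s) = i → y ∈ betaSet lam

lemma mem_shiftSet {S : Set ℤ} {c z : ℤ} : z ∈ shiftSet S c ↔ z - c ∈ S := by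
  constructor
  · rintro ⟨w, hw, rfl⟩; simpa using hw
  · intro h; exact ⟨z - c, h, by ring⟩

/-- For an `s`-core, membership of `z` (of residue `i`) in the beta set is
equivalent to `z < β_i`. -/
lemma mem_iff_lt {s : ℕ} (hs : 0 < s) {lam : Partition'} (hcore : IsCore lam s)
    {i : ZMod s} {b : ℤ} (hb : IsBetaNum s lam i b) {z : ℤ} (hz : (z : ZMod s) = i) :
    z ∈ betaSet lam ↔ z < b := by
  constructor
  · intro hmem
    by_contra hlt
    push_neg at hlt
    have hnot : ∀ k : ℕ, b + (k : ℤ) * s ∉ betaSet lam := by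
      intro k
      induction k with
      | zero => simpa using hb.1
      | succ n ih =>
        intro hmem'
        have h2 := hcore _ hmem'
        have he : b + ((n + 1 : ℕ) : ℤ) * s - s = b + (n : ℤ) * s := by push_cast; ring
        rw [he] at h2
        exact ih h2
    have hdvd : (s : ℤ) ∣ z - b :=
      ((ZMod.intCast_eq_intCast_iff b z s).mp (by rw [hb.2.1, hz])).dvd
    obtain ⟨m, hm⟩ := hdvd
    have hm0 : 0 ≤ m := by
      by_contra h'
      push_neg at h'
      have hspos : (0:ℤ) < s := by exact_mod_cast hs
      have : (s:ℤ) * m < 0 := mul_neg_of_pos_of_neg hspos h'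
      linarith
    have hz' : z = b + ((m.toNat : ℤ)) * s := by
      rw [Int.toNat_of_nonneg hm0, mul_comm]; linarith
    exact hnot m.toNat (hz' ▸ hmem)
  · intro hlt
    exact hb.2.2 z hlt hz

/-- Beta numbers exist. -/
lemma exists_isBetaNum {s : ℕ} (hs : 0 < s) (lam : Partition') (i : ZMod s) :
    ∃ b, IsBetaNum s lam i b := by
  classical
  haveI : NeZero s := ⟨hs.ne'⟩
  obtain ⟨N, hN⟩ := lam.finite_support
  have hub : ∀ z ∈ betaSet lam, z ≤ (lam.parts 0 : ℤ) - 1 := by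
    rintro z ⟨j, rfl⟩
    have := lam.antitone 0 j (Nat.zero_le j)
    push_cast
    omega
  have hlow : ∀ z : ℤ, z < -(N : ℤ) → z ∈ betaSet lam := by
    intro z hzlt
    refine ⟨(-z - 1).toNat, ?_⟩
    have h2 : lam.parts (-z - 1).toNat = 0 := hN _ (by omega)
    show ((lam.parts (-z - 1).toNat : ℤ)) - (((-z - 1).toNat : ℤ) + 1) = z
    rw [h2]
    push_cast
    omega
  have hinh : ∃ z : ℤ, z ∉ betaSet lam ∧ (z : ZMod s) = i := by
    refine ⟨((i.val + s * lam.parts 0 : ℕ) : ℤ), ?_, ?_⟩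
    · intro hmem
      have h1 := hub _ hmem
      have h2 : lam.parts 0 ≤ s * lam.parts 0 := Nat.le_mul_of_pos_left _ hs
      push_cast at h1
      omega
    · push_cast
      simp [ZMod.natCast_val, ZMod.cast_id, ZMod.natCast_self]
  obtain ⟨b, hb, hleast⟩ := Int.exists_least_of_bdd
    (P := fun z => z ∉ betaSet lam ∧ (z : ZMod s) = i)
    ⟨-(N : ℤ), fun z hz => by
      by_contra h
      push_neg at h
      exact hz.1 (hlow z h)⟩
    hinh
  refine ⟨b, hb.1, hb.2, fun y hy hyi => ?_⟩
  by_contra hmem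
  exact absurd (hleast y ⟨hmem, hyi⟩) (not_le.mpr hy)

/-- Beta numbers are unique. -/
lemma betaNum_unique {s : ℕ} {lam : Partition'} {i : ZMod s} {b b' : ℤ}
    (h : IsBetaNum s lam i b) (h' : IsBetaNum s lam i b') : b = b' := by
  by_contra hne
  rcases lt_or_gt_of_ne hne with hlt | hlt
  · exact h.1 (h'.2.2 b hlt h.2.1)
  · exact h'.1 (h.2.2 b' hlt h'.2.1)

/-- If the beta set of one partition is contained in that of another, they are equal
(a counting argument: beta sets of partitions have "charge zero"). -/
lemma betaSet_subset_symm (P Q : Partition') (h : betaSet P ⊆ betaSet Q) :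
    betaSet Q ⊆ betaSet P := by
  classical
  obtain ⟨NP, hNP⟩ := P.finite_support
  obtain ⟨NQ, hNQ⟩ := Q.finite_support
  rintro z ⟨i, hi⟩
  set M := max (max NP NQ) (i + 1) with hM
  have key : ∀ R : Partition',
      Function.Injective (fun j : Fin M => (R.parts j : ℤ) - ((j : ℕ) + 1)) := by
    intro R j j' hjj
    simp only at hjj
    rcases lt_trichotomy (j : ℕ) (j' : ℕ) with h' | h' | h'
    · have := R.antitone j j' h'.le
      exact absurd hjj (by omega)
    · exact Fin.ext h'
    · have := R.antitone j' j h'.le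
      exact absurd hjj (by omega)
  set SP : Finset ℤ := Finset.image (fun j : Fin M => (P.parts j : ℤ) - ((j : ℕ) + 1)) Finset.univ
    with hSP
  set SQ : Finset ℤ := Finset.image (fun j : Fin M => (Q.parts j : ℤ) - ((j : ℕ) + 1)) Finset.univ
    with hSQ
  have hsub : SP ⊆ SQ := by
    intro z' hz'
    simp only [hSP, hSQ, Finset.mem_image, Finset.mem_univ, true_and] at hz' ⊢
    obtain ⟨j, hj⟩ := hz'
    have hzB : z' ∈ betaSet Q := h ⟨j, hj⟩
    obtain ⟨k, hk⟩ := hzB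
    have hkM : k < M := by
      by_contra hkM'
      push_neg at hkM'
      have h0 : Q.parts k = 0 := hNQ k (le_trans (le_trans (le_max_right NP NQ)
        (le_max_left _ _)) hkM')
      have hjM : (j : ℕ) < M := j.isLt
      have hk' : (Q.parts k : ℤ) - ((k : ℤ) + 1) = z' := hk
      rw [h0] at hk'
      omega
    exact ⟨⟨k, hkM⟩, hk⟩
  have hcard : SQ.card ≤ SP.card := by
    rw [hSP, hSQ, Finset.card_image_of_injective _ (key P),
      Finset.card_image_of_injective _ (key Q)]
  have heq : SP = SQ := Finset.eq_of_subset_of_card_le hsub hcard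
  have hiM : i < M := lt_of_lt_of_le (Nat.lt_succ_self i) (le_max_right _ _)
  have hzQ : z ∈ SQ := by
    rw [hSQ]
    exact Finset.mem_image.mpr ⟨⟨i, hiM⟩, Finset.mem_univ _, hi⟩
  rw [← heq, hSP] at hzQ
  obtain ⟨j, _, hj⟩ := Finset.mem_image.mp hzQ
  exact ⟨j, hj⟩

/-- for `s ≥ 2`, `0 ≤ a < s`, `e = s - a` if `a > 0` and `e = 0`
if `a = 0`, and `s`-cores `λ, μ`: the sandwich condition
`B(λ) + e ⊇ B(μ) ⊇ B(λ) + e - s` holds iff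
`β_i(μ) + a ∈ {β_{i+a}(λ), β_{i+a}(λ) + s}` for every `i ∈ ℤ/sℤ`. -/
theorem stmt_16 (s a : ℕ) (hs : 2 ≤ s) (ha : a < s)
    (lam mu : Partition') (hlam : IsCore lam s) (hmu : IsCore mu s) :
    (betaSet mu ⊆ shiftSet (betaSet lam) (if a = 0 then 0 else (s : ℤ) - a) ∧
      shiftSet (betaSet lam) ((if a = 0 then 0 else (s : ℤ) - a) - s) ⊆ betaSet mu) ↔
      ∀ (i : ZMod s) (x y : ℤ), IsBetaNum s mu i x →
        IsBetaNum s lam (i + (a : ZMod s)) y → x + a = y ∨ x + a = y + s := by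
  have hs0 : 0 < s := by omega
  have hsa : (a : ℤ) < (s : ℤ) := by exact_mod_cast ha
  by_cases ha0 : a = 0
  · -- case a = 0
    subst ha0
    simp only [reduceIte, Nat.cast_zero, add_zero, zero_sub]
    constructor
    · rintro ⟨h1, h2⟩ i x y hx hy
      have hsub : betaSet mu ⊆ betaSet lam := by
        intro z hz
        have := h1 hz
        rw [mem_shiftSet] at this
        simpa using this
      have heq : betaSet lam = betaSet mu :=
        Set.Subset.antisymm (betaSet_subset_symm _ _ hsub) hsub
      have hy' : IsBetaNum s mu i y := by
        simp only [IsBetaNum, heq] at hy ⊢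
        exact hy
      left
      exact betaNum_unique hx hy'
    · intro H
      have hsub : betaSet lam ⊆ betaSet mu := by
        intro z hz
        obtain ⟨y, hy⟩ := exists_isBetaNum hs0 lam ((z : ZMod s))
        obtain ⟨x, hx⟩ := exists_isBetaNum hs0 mu ((z : ZMod s))
        have hcase := H _ x y hx hy
        have hzy : z < y := (mem_iff_lt hs0 hlam hy rfl).mp hz
        exact (mem_iff_lt hs0 hmu hx rfl).mpr (by omega)
      have heq : betaSet mu = betaSet lam :=
        Set.Subset.antisymm (betaSet_subset_symm _ _ hsub) hsub
      constructor
      · intro z hz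
        rw [mem_shiftSet]
        simpa using heq ▸ hz
      · intro z hz
        rw [mem_shiftSet] at hz
        have h1 : z - -(s : ℤ) - (s : ℤ) = z := by ring
        have h2 := hlam _ hz
        rw [h1] at h2
        exact hsub h2
  · -- case a ≠ 0
    rw [if_neg ha0]
    have hE : (((s : ℤ) - (a : ℕ) : ℤ) : ZMod s) = -(a : ZMod s) := by
      push_cast [ZMod.natCast_self]
      ring
    constructor
    · rintro ⟨h1, h2⟩ i x y hx hy
      -- Claim A : x ≤ y + (s - a)
      have hA : x ≤ y + ((s : ℤ) - a) := by
        by_contra hA'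
        push_neg at hA'
        have hres : ((y + ((s : ℤ) - a) : ℤ) : ZMod s) = i := by
          rw [Int.cast_add, hy.2.1, hE]
          ring
        have hmem : y + ((s : ℤ) - a) ∈ betaSet mu :=
          (mem_iff_lt hs0 hmu hx hres).mpr hA'
        have h3 := h1 hmem
        rw [mem_shiftSet] at h3
        have h4 : y + ((s : ℤ) - a) - ((s : ℤ) - a) = y := by ring
        rw [h4] at h3
        exact hy.1 h3
      -- Claim B : y + (s - a) - s ≤ x
      have hB : y + ((s : ℤ) - a) - s ≤ x := by
        by_contra hB'
        push_neg at hB'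
        have hres : ((x - (((s : ℤ) - a) - s) : ℤ) : ZMod s) = i + a := by
          rw [Int.cast_sub, hx.2.1, Int.cast_sub, hE]
          push_cast [ZMod.natCast_self]
          ring
        have hlt : x - (((s : ℤ) - a) - s) < y := by linarith
        have hmem : x - (((s : ℤ) - a) - s) ∈ betaSet lam :=
          (mem_iff_lt hs0 hlam hy hres).mpr hlt
        have h3 : x ∈ shiftSet (betaSet lam) (((s : ℤ) - a) - s) :=
          mem_shiftSet.mpr hmem
        exact hx.1 (h2 h3)
      -- divisibility
      have hd : (s : ℤ) ∣ x - (y + ((s : ℤ) - a)) := by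
        have hcast : ((x : ℤ) : ZMod s) = (((y + ((s : ℤ) - a)) : ℤ) : ZMod s) := by
          rw [hx.2.1, Int.cast_add, hy.2.1, hE]
          ring
        exact (((ZMod.intCast_eq_intCast_iff _ _ _).mp hcast).symm).dvd
      obtain ⟨k, hk⟩ := hd
      have hspos : (0 : ℤ) < s := by exact_mod_cast hs0
      have hkk : k = 0 ∨ k = -1 := by
        rcases le_or_gt k (-2) with hkc | hkc
        · exfalso; nlinarith
        · rcases le_or_gt 1 k with hkc' | hkc'
          · exfalso; nlinarith
          · omega
      rcases hkk with rfl | rfl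
      · right; linarith
      · left; linarith
    · intro H
      constructor
      · intro z hz
        obtain ⟨x, hx⟩ := exists_isBetaNum hs0 mu ((z : ZMod s))
        obtain ⟨y, hy⟩ := exists_isBetaNum hs0 lam ((z : ZMod s) + a)
        have hcase := H _ _ _ hx hy
        have hzx : z < x := (mem_iff_lt hs0 hmu hx rfl).mp hz
        rw [mem_shiftSet]
        have hres : ((z - ((s : ℤ) - a) : ℤ) : ZMod s) = (z : ZMod s) + a := by
          rw [Int.cast_sub, hE]
          ring
        refine (mem_iff_lt hs0 hlam hy hres).mpr ?_
        rcases hcase with h | h <;> linarith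
      · intro z hz
        rw [mem_shiftSet] at hz
        obtain ⟨x, hx⟩ := exists_isBetaNum hs0 mu ((z : ZMod s))
        obtain ⟨y, hy⟩ := exists_isBetaNum hs0 lam ((z : ZMod s) + a)
        have hcase := H _ _ _ hx hy
        have hres : ((z - (((s : ℤ) - a) - s) : ℤ) : ZMod s) = (z : ZMod s) + a := by
          rw [Int.cast_sub, Int.cast_sub, hE]
          push_cast [ZMod.natCast_self]
          ring
        have hlt : z - (((s : ℤ) - a) - s) < y := (mem_iff_lt hs0 hlam hy hres).mp hz
        refine (mem_iff_lt hs0 hmu hx rfl).mpr ?_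
        rcases hcase with h | h <;> linarith
end

section
/- Let c ∈ ℤ^l, m = max(c_1, ..., c_l), K = {k : c_k = m}, and n ≥ 1. Define the multipartition λ with λ^(k) = (n) (a single row of length n) for k ∈ K and λ^(k) = ∅ otherwise. Then λ is the unique l-multipartition whose multiset of (0|c)-residues equals {m^{|K|}, (m+1)^{|K|}, ..., (m+n-1)^{|K|}}, where the (0|c)-residue of a node (a,b,k) is b - a + c_k ∈ ℤ. -/
/-- The number of nodes of an `l`-multipartition `μ` of `(0|c)`-residue `x`:
nodes are triples (row `t.1`, 0-based; column `t.2.1`, 1-based; component `t.2.2`),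
and the residue of node `(a, b, k)` (with `a` 1-based) is `b - a + c_k`. -/
noncomputable def mcount (l : ℕ) (c : Fin l → ℤ) (mu : Fin l → Partition') (x : ℤ) : ℕ :=
  {t : ℕ × ℕ × Fin l | 1 ≤ t.2.1 ∧ t.2.1 ≤ (mu t.2.2).parts t.1 ∧
    (t.2.1 : ℤ) - ((t.1 : ℤ) + 1) + c t.2.2 = x}.ncard

/-! Since every `c k ≤ m` and no residue below `m` occurs, the node `(i, 1, k)`, of residue
`c k - i`, shows that every nonzero row is the first row of a component with `c k = m`.
Such a multipartition has `#{k ∈ K : d < μ^(k)_1}` nodes of residue `m + d`, and these counts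
force `μ^(k)_1 = n` for every `k ∈ K`. -/

lemma Partition'.ext_parts {p q : Partition'} (h : p.parts = q.parts) : p = q := by
  cases p; cases q; simp_all

lemma Partition'.finite_nodes (p : Partition') :
    {ab : ℕ × ℕ | 1 ≤ ab.2 ∧ ab.2 ≤ p.parts ab.1}.Finite := by
  obtain ⟨N, hN⟩ := p.finite_support
  refine ((Set.finite_Iio N).prod (Set.finite_Iic (p.parts 0))).subset ?_
  rintro ⟨a, b⟩ ⟨h1, h2⟩
  refine ⟨?_, h2.trans (p.antitone 0 a a.zero_le)⟩
  by_contra ha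
  have := hN a (not_lt.1 ha)
  simp only at h2
  omega

section Multipartition

variable {l : ℕ} (c : Fin l → ℤ) (m : ℤ)

def resNodes (mu : Fin l → Partition') (x : ℤ) : Set (ℕ × ℕ × Fin l) :=
  {t | 1 ≤ t.2.1 ∧ t.2.1 ≤ (mu t.2.2).parts t.1 ∧ (t.2.1 : ℤ) - ((t.1 : ℤ) + 1) + c t.2.2 = x}

lemma mcount_eq_ncard_resNodes (mu : Fin l → Partition') (x : ℤ) :
    mcount l c mu x = (resNodes c mu x).ncard := rfl

lemma resNodes_finite (mu : Fin l → Partition') (x : ℤ) : (resNodes c mu x).Finite := by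
  refine (Set.finite_iUnion fun k => (mu k).finite_nodes.image fun ab => (ab.1, ab.2, k)).subset ?_
  rintro ⟨a, b, k⟩ ⟨h1, h2, -⟩
  exact Set.mem_iUnion.2 ⟨k, (a, b), ⟨h1, h2⟩, rfl⟩

lemma mcount_pos {mu : Fin l → Partition'} {a b : ℕ} {k : Fin l} (hb : 1 ≤ b)
    (hab : b ≤ (mu k).parts a) : 0 < mcount l c mu ((b : ℤ) - ((a : ℤ) + 1) + c k) :=
  (Set.ncard_pos (resNodes_finite c mu _)).2 ⟨(a, b, k), hb, hab, rfl⟩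

def OnFirstRows (mu : Fin l → Partition') : Prop :=
  ∀ k i, (mu k).parts i ≠ 0 → i = 0 ∧ c k = m

variable {c m}

lemma OnFirstRows.eq {mu nu : Fin l → Partition'} (hmu : OnFirstRows c m mu)
    (hnu : OnFirstRows c m nu) (h : ∀ k, c k = m → (mu k).parts 0 = (nu k).parts 0) :
    mu = nu := by
  funext k
  refine Partition'.ext_parts (funext fun i => ?_)
  by_cases hi : i = 0 ∧ c k = m
  · rw [hi.1, h k hi.2]
  · have hmi : (mu k).parts i = 0 := by_contra fun h' => hi (hmu k i h')
    have hni : (nu k).parts i = 0 := by_contra fun h' => hi (hnu k i h')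
    rw [hmi, hni]

lemma onFirstRows_of_mcount_eq_zero {mu : Fin l → Partition'} (hc : ∀ k, c k ≤ m)
    (h : ∀ x < m, mcount l c mu x = 0) : OnFirstRows c m mu := by
  intro k i hi
  have hpos := mcount_pos c le_rfl (Nat.one_le_iff_ne_zero.2 hi)
  by_contra hik
  have := hc k
  rw [h _ (by push_cast; omega)] at hpos
  exact hpos.false

/-- In the first row of component `k` the residue `x` sits in column `x - m + 1`. -/
lemma mcount_of_onFirstRows {mu : Fin l → Partition'} (hmu : OnFirstRows c m mu) (x : ℤ) :
    mcount l c mu x = {k | c k = m ∧ m ≤ x ∧ x < m + (mu k).parts 0}.ncard := by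
  have hnodes : resNodes c mu x = (fun k => (0, (x - m).toNat + 1, k)) ''
      {k | c k = m ∧ m ≤ x ∧ x < m + (mu k).parts 0} := by
    ext ⟨a, b, k⟩
    simp only [resNodes, Set.mem_ofPred_eq, Set.mem_image, Prod.mk.injEq]
    constructor
    · rintro ⟨h1, h2, h3⟩
      obtain ⟨rfl, hk⟩ := hmu k a (by omega)
      exact ⟨k, ⟨hk, by omega, by omega⟩, rfl, by omega, rfl⟩
    · rintro ⟨k, ⟨hk, hmx, hxm⟩, rfl, rfl, rfl⟩
      exact ⟨by omega, by omega, by omega⟩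
  rw [mcount_eq_ncard_resNodes, hnodes, Set.ncard_image_of_injective]
  intro k k' hkk'
  exact congrArg (fun t : ℕ × ℕ × Fin l => t.2.2) hkk'

end Multipartition

lemma eq_of_ncard_setOf_lt_eq {ι : Type*} [Finite ι] {P : ι → Prop} {p : ι → ℕ} {n : ℕ}
    (h : ∀ d : ℕ, {i | P i ∧ d < p i}.ncard = if d < n then {i | P i}.ncard else 0)
    {i : ι} (hi : P i) : p i = n := by
  rcases lt_trichotomy (p i) n with hlt | heq | hgt
  · have hall : {j | P j ∧ p i < p j} = {j | P j} :=
      Set.eq_of_subset_of_ncard_le (fun j hj => hj.1) (by rw [h, if_pos hlt]) (Set.toFinite _)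
    exact absurd (hall.symm ▸ hi : i ∈ {j | P j ∧ p i < p j}).2 (lt_irrefl _)
  · exact heq
  · have hpos : 0 < {j | P j ∧ n < p j}.ncard := (Set.ncard_pos (Set.toFinite _)).2 ⟨i, hi, hgt⟩
    rw [h, if_neg (lt_irrefl n)] at hpos
    exact absurd hpos (lt_irrefl 0)

theorem stmt_18_general (l : ℕ) (c : Fin l → ℤ) (m : ℤ) (hm : IsGreatest (Set.range c) m)
    (n : ℕ) (lam : Fin l → Partition')
    (hlamK : ∀ k : Fin l, c k = m → (lam k).parts = fun r => if r = 0 then n else 0)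
    (hlamK' : ∀ k : Fin l, c k ≠ m → (lam k).parts = fun _ => 0) :
    ∀ mu : Fin l → Partition',
      (∀ x : ℤ, mcount l c mu x =
          if m ≤ x ∧ x < m + n then {k : Fin l | c k = m}.ncard else 0) ↔ mu = lam := by
  intro mu
  have hc : ∀ k, c k ≤ m := fun k => hm.2 ⟨k, rfl⟩
  have hlam0 : ∀ k, c k = m → (lam k).parts 0 = n := fun k hk => by simp [hlamK k hk]
  have hlam : OnFirstRows c m lam := by
    intro k i hi
    by_cases hk : c k = m
    · simp_all
    · simp [hlamK' k hk] at hi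
  constructor
  · intro h
    have hmu : OnFirstRows c m mu :=
      onFirstRows_of_mcount_eq_zero hc fun x hx => by rw [h, if_neg (by omega)]
    refine hmu.eq hlam fun k hk => ?_
    rw [hlam0 k hk]
    refine eq_of_ncard_setOf_lt_eq (P := fun k => c k = m) (p := fun k => (mu k).parts 0)
      (fun d => ?_) hk
    have hd := h (m + d)
    rw [mcount_of_onFirstRows hmu] at hd
    simpa using hd
  · intro hmulam x
    have hrows : {k | c k = m ∧ m ≤ x ∧ x < m + (lam k).parts 0} =
        {k | c k = m ∧ (m ≤ x ∧ x < m + n)} :=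
      Set.ext fun k => and_congr_right fun hk => by rw [hlam0 k hk]
    rw [hmulam, mcount_of_onFirstRows hlam, hrows]
    split_ifs with hx <;> simp [hx]

/-- with `m = max(c_1, ..., c_l)`, `K = {k : c_k = m}` and `n ≥ 1`,
the multipartition `λ` with `λ^(k) = (n)` for `k ∈ K` and `λ^(k) = ∅` otherwise is
the unique `l`-multipartition whose multiset of `(0|c)`-residues is
`{m^{|K|}, (m+1)^{|K|}, ..., (m+n-1)^{|K|}}`. -/
theorem stmt_18 (l : ℕ) (c : Fin l → ℤ) (m : ℤ) (hm : IsGreatest (Set.range c) m)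
    (n : ℕ) (hn : 1 ≤ n) (lam : Fin l → Partition')
    (hlamK : ∀ k : Fin l, c k = m → (lam k).parts = fun r => if r = 0 then n else 0)
    (hlamK' : ∀ k : Fin l, c k ≠ m → (lam k).parts = fun _ => 0) :
    ∀ mu : Fin l → Partition',
      (∀ x : ℤ, mcount l c mu x =
          if m ≤ x ∧ x < m + n then {k : Fin l | c k = m}.ncard else 0) ↔ mu = lam :=
  stmt_18_general l c m hm n lam hlamK hlamK'
end

section
/- For s ≥ 1 and partitions λ, μ with e ∈ {0, ..., s-1}, if B(λ) + e ⊇ B(μ) ⊇ B(λ) + e - s, then both λ and μ are s-cores. -/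
/-- for `s ≥ 1` and `0 ≤ e < s`, the sandwich condition
`B(λ) + e ⊇ B(μ) ⊇ B(λ) + e - s` forces both `λ` and `μ` to be `s`-cores. -/
theorem stmt_19 (s : ℕ) (hs : 0 < s) (e : ℤ) (he0 : 0 ≤ e) (hes : e < s)
    (lam mu : Partition')
    (h1 : betaSet mu ⊆ shiftSet (betaSet lam) e)
    (h2 : shiftSet (betaSet lam) (e - s) ⊆ betaSet mu) :
    IsCore lam s ∧ IsCore mu s := by
  constructor
  · intro x hx
    have h3 : x + (e - s) ∈ shiftSet (betaSet lam) (e - s) := ⟨x, hx, rfl⟩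
    obtain ⟨y, hy, hxy⟩ := h1 (h2 h3)
    have : y = x - s := by linarith [show y + e = _ from hxy]
    exact this ▸ hy
  · intro x hx
    obtain ⟨y, hy, hxy⟩ := h1 hx
    have h3 : y + (e - s) ∈ shiftSet (betaSet lam) (e - s) := ⟨y, hy, rfl⟩
    have : x - s = y + (e - s) := by linarith [show y + e = x from hxy]
    exact this ▸ h2 h3
end
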